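/- arXiv:1802.10291 — 2 statements merged into one kernel-verified Lean document; each statement's English description precedes it below -/
import Mathlib

section
/- Let N be a natural number and f(t) = Σ_{n=−N}^{N} a(n) e^{int} with a(n) ∈ ℂ (no restriction on a(0)). Then for all t ∈ ℝ, Hf(t) = (1/(2N+1)) Σ_{p=0}^{2N} (f(t_p) − a(0)) · ỹ(t − t_p), where t_p = 2πp/(2N+1) and ỹ(t) = Σ_{0<|n|≤N} (−i·sgn(n)) e^{int}. -/
/-!
Write `f - a(0)` and `ỹ` as trigonometric polynomials with frequencies in `[-N, N] \ {0}`.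
Expanding the sampled convolution, the sum over the nodes `t_p` of `e^{i(n-m)t_p}` is the
orthogonality sum of the `(2N+1)`-th roots of unity, which vanishes unless `2N+1 ∣ n - m`,
i.e. unless `n = m` since `|n - m| ≤ 2N`. Only the diagonal survives, and it multiplies each
coefficient `a(n)` by the coefficient `-i sgn(n)` of `ỹ`; the term `a(0)` of `Hf` vanishes
because `sgn 0 = 0`.
-/

open Real Finset

theorem IsPrimitiveRoot.sum_range_zpow_pow {K : Type*} [Field K] {ζ : K} {M : ℕ}
    (hζ : IsPrimitiveRoot ζ M) (k : ℤ) :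
    ∑ p ∈ range M, (ζ ^ k) ^ p = if (M : ℤ) ∣ k then (M : K) else 0 := by
  split_ifs with hk
  · simp [(hζ.zpow_eq_one_iff_dvd k).2 hk]
  · have hne : ζ ^ k - 1 ≠ 0 := sub_ne_zero.2 (mt (hζ.zpow_eq_one_iff_dvd k).1 hk)
    have hpow : (ζ ^ k) ^ M = 1 := by
      rw [← zpow_natCast, ← zpow_mul, mul_comm, zpow_mul, zpow_natCast, hζ.pow_eq_one, one_zpow]
    apply mul_right_cancel₀ hne
    rw [geom_sum_mul, hpow, sub_self, zero_mul]

theorem sum_range_exp_two_pi_mul_div {M : ℕ} (hM : M ≠ 0) (k : ℤ) :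
    ∑ p ∈ range M, Complex.exp (Complex.I * k * ((2 * π * p / M : ℝ) : ℂ)) =
      if (M : ℤ) ∣ k then (M : ℂ) else 0 := by
  rw [← (Complex.isPrimitiveRoot_exp M hM).sum_range_zpow_pow k]
  refine sum_congr rfl fun p _ => ?_
  rw [← Complex.exp_int_mul, ← Complex.exp_nat_mul]
  push_cast
  ring_nf

theorem Int.eq_of_dvd_sub_of_mem_Icc {N n m : ℤ} (hn : n ∈ Icc (-N) N) (hm : m ∈ Icc (-N) N)
    (hdvd : 2 * N + 1 ∣ n - m) : n = m := by
  rw [mem_Icc] at hn hm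
  exact sub_eq_zero.1 (Int.eq_zero_of_abs_lt_dvd hdvd (abs_lt.2 ⟨by omega, by omega⟩))

noncomputable def trigPoly (S : Finset ℤ) (b : ℤ → ℂ) (t : ℝ) : ℂ :=
  ∑ n ∈ S, b n * Complex.exp (Complex.I * n * t)

theorem sum_range_trigPoly_mul_trigPoly_sub {M : ℕ} (hM : M ≠ 0) {S : Finset ℤ}
    (hS : ∀ n ∈ S, ∀ m ∈ S, (M : ℤ) ∣ n - m → n = m) (b c : ℤ → ℂ) (t : ℝ) :
    ∑ p ∈ range M, trigPoly S b (2 * π * p / M) * trigPoly S c (t - 2 * π * p / M) =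
      M * trigPoly S (fun n => c n * b n) t := by
  have hexp : ∀ (n m : ℤ) (p : ℕ),
      Complex.exp (Complex.I * n * ((2 * π * p / M : ℝ) : ℂ)) *
        Complex.exp (Complex.I * m * ((t - 2 * π * p / M : ℝ) : ℂ)) =
      Complex.exp (Complex.I * m * t) *
        Complex.exp (Complex.I * ((n - m : ℤ) : ℂ) * ((2 * π * p / M : ℝ) : ℂ)) := by
    intro n m p
    rw [← Complex.exp_add, ← Complex.exp_add]
    push_cast
    ring_nf
  have horth : ∀ n ∈ S, ∀ m ∈ S, ∑ p ∈ range M, b n * c m *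
      (Complex.exp (Complex.I * m * t) *
        Complex.exp (Complex.I * ((n - m : ℤ) : ℂ) * ((2 * π * p / M : ℝ) : ℂ))) =
      if n = m then M * (c n * b n * Complex.exp (Complex.I * n * t)) else 0 := by
    intro n hn m hm
    have hiff : (M : ℤ) ∣ n - m ↔ n = m :=
      ⟨hS n hn m hm, fun h => by rw [h, sub_self]; exact dvd_zero _⟩
    rw [← mul_sum, ← mul_sum, sum_range_exp_two_pi_mul_div hM]
    simp only [hiff]
    split_ifs with h
    · subst h
      ring
    · rw [mul_zero, mul_zero]
  unfold trigPoly
  calc _ = ∑ n ∈ S, ∑ m ∈ S, ∑ p ∈ range M, b n * c m *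
        (Complex.exp (Complex.I * m * t) *
          Complex.exp (Complex.I * ((n - m : ℤ) : ℂ) * ((2 * π * p / M : ℝ) : ℂ))) := by
        simp_rw [sum_mul_sum, ← hexp]
        rw [sum_comm]
        refine sum_congr rfl fun n _ => ?_
        rw [sum_comm]
        exact sum_congr rfl fun m _ => sum_congr rfl fun p _ => by ring
    _ = M * ∑ n ∈ S, c n * b n * Complex.exp (Complex.I * n * t) := by
        rw [mul_sum]
        refine sum_congr rfl fun n hn => ?_
        rw [sum_congr rfl (horth n hn), sum_ite_eq S n, if_pos hn]

/-- Example 3.3, formula (17): the circular Hilbert transform of a trigonometric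
polynomial computed from the samples of the polynomial itself (valid without any
restriction on `a(0)`). -/
theorem hilbert_transform_from_samples
    (N : ℕ) (a : ℤ → ℂ)
    (f Hf ytilde : ℝ → ℂ)
    (hf : ∀ t : ℝ, f t = ∑ n ∈ Finset.Icc (-(N : ℤ)) (N : ℤ),
      a n * Complex.exp (Complex.I * (n : ℂ) * (t : ℂ)))
    (hHf : ∀ t : ℝ, Hf t = ∑ n ∈ Finset.Icc (-(N : ℤ)) (N : ℤ),
      (-Complex.I * ((Int.sign n : ℤ) : ℂ)) * a n * Complex.exp (Complex.I * (n : ℂ) * (t : ℂ)))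
    (hy : ∀ t : ℝ, ytilde t = ∑ n ∈ (Finset.Icc (-(N : ℤ)) (N : ℤ)).erase 0,
      (-Complex.I * ((Int.sign n : ℤ) : ℂ)) * Complex.exp (Complex.I * (n : ℂ) * (t : ℂ))) :
    ∀ t : ℝ, Hf t = (1 / (2 * (N : ℂ) + 1)) * ∑ p ∈ Finset.range (2 * N + 1),
      (f (2 * π * p / (2 * N + 1)) - a 0) * ytilde (t - 2 * π * p / (2 * N + 1)) := by
  intro t
  set S := (Icc (-(N : ℤ)) (N : ℤ)).erase 0
  have h0 : (0 : ℤ) ∈ Icc (-(N : ℤ)) (N : ℤ) := by simp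
  have hS : ∀ n ∈ S, ∀ m ∈ S, ((2 * N + 1 : ℕ) : ℤ) ∣ n - m → n = m :=
    fun n hn m hm hdvd => Int.eq_of_dvd_sub_of_mem_Icc (mem_of_mem_erase hn)
      (mem_of_mem_erase hm) (by exact_mod_cast hdvd)
  have hf₀ : ∀ s : ℝ, f s - a 0 = trigPoly S a s := by
    intro s
    rw [hf, trigPoly, sum_erase_eq_sub h0]
    simp
  have hHf₀ : Hf t = trigPoly S (fun n => -Complex.I * ((Int.sign n : ℤ) : ℂ) * a n) t := by
    rw [hHf, trigPoly, sum_erase_eq_sub h0]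
    simp
  have hy₀ : ∀ s : ℝ, ytilde s = trigPoly S (fun n => -Complex.I * ((Int.sign n : ℤ) : ℂ)) s := hy
  have hM : (2 * (N : ℝ) + 1) = ((2 * N + 1 : ℕ) : ℝ) := by push_cast; ring
  simp_rw [hf₀, hy₀, hM]
  rw [sum_range_trigPoly_mul_trigPoly_sub (by omega) hS, hHf₀, one_div]
  push_cast
  exact (inv_mul_cancel_left₀ (by norm_cast) _).symm
end

section
/- Let N be a natural number and f(t) = Σ_{n=−N}^{N} a(n) e^{int} with a(n) ∈ ℂ, and suppose f is real-valued (f(t) ∈ ℝ for all t ∈ ℝ). Then for all t ∈ ℝ, Hf(t) = (1/(N+1)) Σ_{p=0}^{N} [ f(t_p) y_i(t − t_p) + Hf(t_p) y_r(t − t_p) ], where t_p = 2πp/(N+1), y_r(t) = Σ_{n=0}^{N} cos(nt) and y_i(t) = Σ_{n=0}^{N} sin(nt). -/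
/-!
Write `t_p = 2πp/(N+1)` and `D(s) = ∑_{m=0}^{N} e^{ims} = y_r(s) + i y_i(s)`. By the
orthogonality of the `(N+1)`-st roots of unity, `∑_p e^{in t_p} D(t - t_p) = (N+1) e^{int}`
for `0 ≤ n ≤ N`, and, conjugating, `∑_p e^{in t_p} D(t_p - t) = (N+1) e^{int}` for
`-N ≤ n ≤ 0`. Since `y_i - i sgn(n) y_r` equals `-i D`, `i D(-·)` or `(D - D(-·)) / 2i`
according as `n > 0`, `n < 0` or `n = 0`, the sampling formula holds for each mode `e^{int}`
with `|n| ≤ N`, hence by linearity for `f`.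
-/

open Real Finset Complex ComplexConjugate

noncomputable def fourierMode (n : ℤ) (t : ℝ) : ℂ := Complex.exp (I * n * t)

noncomputable def samplePoint (N p : ℕ) : ℝ := 2 * π * p / (N + 1)

noncomputable def cosKernel (N : ℕ) (s : ℝ) : ℝ := ∑ m ∈ range (N + 1), Real.cos (m * s)

noncomputable def sinKernel (N : ℕ) (s : ℝ) : ℝ := ∑ m ∈ range (N + 1), Real.sin (m * s)

noncomputable def expKernel (N : ℕ) (s : ℝ) : ℂ := ∑ m ∈ range (N + 1), fourierMode m s

lemma fourierMode_mul_fourierMode_sub (n m : ℤ) (s t : ℝ) :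
    fourierMode n s * fourierMode m (t - s) = fourierMode m t * fourierMode (n - m) s := by
  simp only [fourierMode, ← Complex.exp_add]
  congr 1
  push_cast
  ring

lemma conj_fourierMode (n : ℤ) (t : ℝ) : conj (fourierMode n t) = fourierMode (-n) t := by
  rw [fourierMode, ← Complex.exp_conj, fourierMode]
  congr 1
  simp

lemma fourierMode_eq_cos_add_sin (n : ℤ) (t : ℝ) :
    fourierMode n t = Real.cos (n * t) + I * Real.sin (n * t) := by
  rw [fourierMode, mul_assoc, mul_comm, Complex.exp_mul_I]
  push_cast
  ring

lemma expKernel_eq (N : ℕ) (s : ℝ) : expKernel N s = cosKernel N s + I * sinKernel N s := by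
  simp [expKernel, cosKernel, sinKernel, fourierMode_eq_cos_add_sin, mul_sum, sum_add_distrib]

lemma expKernel_neg (N : ℕ) (s : ℝ) : expKernel N (-s) = conj (expKernel N s) := by
  simp only [expKernel, map_sum, conj_fourierMode]
  refine sum_congr rfl fun m _ => ?_
  simp only [fourierMode]
  push_cast
  ring_nf

lemma sum_fourierMode_samplePoint (N : ℕ) {k : ℤ} (hk : |k| ≤ N) :
    ∑ p ∈ range (N + 1), fourierMode k (samplePoint N p) =
      if k = 0 then (N + 1 : ℂ) else 0 := by
  set ζ := Complex.exp (2 * π * I / (N + 1 : ℕ))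
  have hζ : IsPrimitiveRoot ζ (N + 1) := Complex.isPrimitiveRoot_exp _ N.succ_ne_zero
  have hterm : ∀ p : ℕ, fourierMode k (samplePoint N p) = (ζ ^ k) ^ p := by
    intro p
    rw [← Complex.exp_int_mul, ← Complex.exp_nat_mul, fourierMode, samplePoint]
    congr 1
    push_cast
    ring
  simp only [hterm]
  split_ifs with hk0
  · simp [hk0]
  · have hne : ζ ^ k ≠ 1 := by
      rw [Ne, hζ.zpow_eq_one_iff_dvd]
      exact fun hd => hk0 (Int.eq_zero_of_abs_lt_dvd hd (by omega))
    rw [geom_sum_eq hne, ← zpow_natCast, ← zpow_mul, mul_comm, zpow_mul, zpow_natCast,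
      hζ.pow_eq_one, one_zpow, sub_self, zero_div]

lemma sum_fourierMode_samplePoint_mul_expKernel_sub_of_nonneg (N : ℕ) {n : ℤ} (hn0 : 0 ≤ n)
    (hnN : n ≤ N) (t : ℝ) :
    ∑ p ∈ range (N + 1), fourierMode n (samplePoint N p) * expKernel N (t - samplePoint N p)
      = (N + 1) * fourierMode n t := by
  lift n to ℕ using hn0
  calc _ = ∑ m ∈ range (N + 1), fourierMode m t *
          ∑ p ∈ range (N + 1), fourierMode (n - m) (samplePoint N p) := by
        simp only [expKernel, mul_sum, fourierMode_mul_fourierMode_sub]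
        exact sum_comm
    _ = ∑ m ∈ range (N + 1), if n = m then fourierMode m t * (N + 1) else 0 := by
        refine sum_congr rfl fun m hm => ?_
        rw [mem_range] at hm
        rw [sum_fourierMode_samplePoint N (by rw [abs_le]; omega), mul_ite, mul_zero]
        simp only [sub_eq_zero, Nat.cast_inj]
    _ = (N + 1) * fourierMode n t := by
        rw [sum_ite_eq, if_pos (by simp; omega), mul_comm]

lemma sum_fourierMode_samplePoint_mul_expKernel_sub_of_nonpos (N : ℕ) {n : ℤ} (hn0 : n ≤ 0)
    (hnN : -N ≤ n) (t : ℝ) :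
    ∑ p ∈ range (N + 1), fourierMode n (samplePoint N p) * expKernel N (samplePoint N p - t)
      = (N + 1) * fourierMode n t := by
  have h := congrArg conj
    (sum_fourierMode_samplePoint_mul_expKernel_sub_of_nonneg N (n := -n) (by omega) (by omega) t)
  simpa [map_sum, conj_fourierMode, ← expKernel_neg] using h

lemma sum_fourierMode_samplePoint_mul_sinKernel_add_cosKernel (N : ℕ) {n : ℤ} (hn : |n| ≤ N)
    (t : ℝ) :
    ∑ p ∈ range (N + 1), fourierMode n (samplePoint N p) *
        (sinKernel N (t - samplePoint N p) +
          (-I * Int.sign n) * cosKernel N (t - samplePoint N p))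
      = (N + 1) * ((-I * Int.sign n) * fourierMode n t) := by
  rw [abs_le] at hn
  set A := ∑ p ∈ range (N + 1),
    fourierMode n (samplePoint N p) * cosKernel N (t - samplePoint N p)
  set B := ∑ p ∈ range (N + 1),
    fourierMode n (samplePoint N p) * sinKernel N (t - samplePoint N p)
  have hS₁ : ∑ p ∈ range (N + 1),
      fourierMode n (samplePoint N p) * expKernel N (t - samplePoint N p) = A + I * B := by
    simp only [A, B, expKernel_eq, mul_sum, ← sum_add_distrib]
    exact sum_congr rfl fun p _ => by ring
  have hS₂ : ∑ p ∈ range (N + 1),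
      fourierMode n (samplePoint N p) * expKernel N (samplePoint N p - t) = A - I * B := by
    simp only [A, B, mul_sum, ← sum_sub_distrib]
    refine sum_congr rfl fun p _ => ?_
    rw [← neg_sub, expKernel_neg, expKernel_eq]
    simp only [map_add, map_mul, conj_ofReal, conj_I]
    ring
  have hsplit : ∑ p ∈ range (N + 1), fourierMode n (samplePoint N p) *
      (sinKernel N (t - samplePoint N p) +
        (-I * Int.sign n) * cosKernel N (t - samplePoint N p)) = B + (-I * Int.sign n) * A := by
    simp only [A, B, mul_sum, ← sum_add_distrib]
    exact sum_congr rfl fun p _ => by ring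
  rw [hsplit]
  rcases lt_trichotomy n 0 with hneg | rfl | hpos
  · have h := sum_fourierMode_samplePoint_mul_expKernel_sub_of_nonpos N hneg.le hn.1 t
    rw [hS₂] at h
    rw [Int.sign_eq_neg_one_of_neg hneg]
    push_cast
    linear_combination I * h + B * I_sq
  · have h₁ := sum_fourierMode_samplePoint_mul_expKernel_sub_of_nonneg N le_rfl (by omega) t
    have h₂ := sum_fourierMode_samplePoint_mul_expKernel_sub_of_nonpos N le_rfl (by omega) t
    rw [hS₁] at h₁
    rw [hS₂] at h₂
    simp only [Int.sign_zero, Int.cast_zero, mul_zero, zero_mul, add_zero]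
    linear_combination (-I / 2) * (h₁ - h₂) + B * I_sq
  · have h := sum_fourierMode_samplePoint_mul_expKernel_sub_of_nonneg N hpos.le hn.2 t
    rw [hS₁] at h
    rw [Int.sign_eq_one_of_pos hpos]
    push_cast
    linear_combination -I * h + B * I_sq

theorem hilbert_of_real_signal_from_self_and_hilbert_samples_general
    (N : ℕ) (a : ℤ → ℂ)
    (f Hf : ℝ → ℂ)
    (hf : ∀ t : ℝ, f t = ∑ n ∈ Finset.Icc (-(N : ℤ)) (N : ℤ),
      a n * Complex.exp (Complex.I * (n : ℂ) * (t : ℂ)))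
    (hHf : ∀ t : ℝ, Hf t = ∑ n ∈ Finset.Icc (-(N : ℤ)) (N : ℤ),
      (-Complex.I * ((Int.sign n : ℤ) : ℂ)) * a n * Complex.exp (Complex.I * (n : ℂ) * (t : ℂ)))
    (yr yi : ℝ → ℝ)
    (hyr : ∀ t : ℝ, yr t = ∑ n ∈ Finset.range (N + 1), Real.cos (n * t))
    (hyi : ∀ t : ℝ, yi t = ∑ n ∈ Finset.range (N + 1), Real.sin (n * t)) :
    ∀ t : ℝ, Hf t = (1 / ((N : ℂ) + 1)) * ∑ p ∈ Finset.range (N + 1),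
      (f (2 * π * p / (N + 1)) * ((yi (t - 2 * π * p / (N + 1)) : ℝ) : ℂ) +
       Hf (2 * π * p / (N + 1)) * ((yr (t - 2 * π * p / (N + 1)) : ℝ) : ℂ)) := by
  intro t
  obtain rfl : yr = cosKernel N := funext hyr
  obtain rfl : yi = sinKernel N := funext hyi
  have hsample : ∀ s₀ s : ℝ, f s₀ * sinKernel N s + Hf s₀ * cosKernel N s =
      ∑ n ∈ Icc (-(N : ℤ)) N,
        a n * (fourierMode n s₀ * (sinKernel N s + (-I * Int.sign n) * cosKernel N s)) := by
    intro s₀ s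
    rw [hf, hHf, sum_mul, sum_mul, ← sum_add_distrib]
    exact sum_congr rfl fun n _ => by rw [fourierMode]; ring
  have hN : (N + 1 : ℂ) ≠ 0 := by exact_mod_cast N.succ_ne_zero
  rw [one_div, eq_inv_mul_iff_mul_eq₀ hN, eq_comm]
  simp only [hsample, ← samplePoint.eq_1]
  rw [sum_comm, hHf, mul_sum]
  refine sum_congr rfl fun n hn => ?_
  rw [← mul_sum,
    sum_fourierMode_samplePoint_mul_sinKernel_add_cosKernel N (abs_le.2 (mem_Icc.1 hn)),
    fourierMode]
  ring

/-- Example 3.4, formula (20): the circular Hilbert transform of a real-valued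
trigonometric polynomial reconstructed from the samples of the polynomial and of
its Hilbert transform. -/
theorem hilbert_of_real_signal_from_self_and_hilbert_samples
    (N : ℕ) (a : ℤ → ℂ)
    (f Hf : ℝ → ℂ)
    (hf : ∀ t : ℝ, f t = ∑ n ∈ Finset.Icc (-(N : ℤ)) (N : ℤ),
      a n * Complex.exp (Complex.I * (n : ℂ) * (t : ℂ)))
    (hreal : ∀ t : ℝ, (f t).im = 0)
    (hHf : ∀ t : ℝ, Hf t = ∑ n ∈ Finset.Icc (-(N : ℤ)) (N : ℤ),
      (-Complex.I * ((Int.sign n : ℤ) : ℂ)) * a n * Complex.exp (Complex.I * (n : ℂ) * (t : ℂ)))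
    (yr yi : ℝ → ℝ)
    (hyr : ∀ t : ℝ, yr t = ∑ n ∈ Finset.range (N + 1), Real.cos (n * t))
    (hyi : ∀ t : ℝ, yi t = ∑ n ∈ Finset.range (N + 1), Real.sin (n * t)) :
    ∀ t : ℝ, Hf t = (1 / ((N : ℂ) + 1)) * ∑ p ∈ Finset.range (N + 1),
      (f (2 * π * p / (N + 1)) * ((yi (t - 2 * π * p / (N + 1)) : ℝ) : ℂ) +
       Hf (2 * π * p / (N + 1)) * ((yr (t - 2 * π * p / (N + 1)) : ℝ) : ℂ)) :=
  hilbert_of_real_signal_from_self_and_hilbert_samples_general N a f Hf hf hHf yr yi hyr hyi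
end
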